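/- For any recursive projective linearisation Π (with associated anti-projective linearisation Π̄ defined by the same permutation ρ but using anti-subtrees), Π̄(S) = Π(overline(S)) for every simple dependency tree S. The proof is by induction on the depth of S. -/

import Mathlib

def rev {ζ σ : Type*} (S : List ζ → Option σ) : List ζ → Option σ :=
  fun x => S x.reverse

/-!
Reversing addresses turns the anti-subtree `x ↦ S (x ++ [i])` of `S` into the subtree
`x ↦ rev S (i :: x)` of `rev S`. Hence the recursive equations for `La S` and `L (rev S)`
have the same root and, child by child, arguments related in the same way, so the claim
follows by induction on the depth of `S`, which anti-subtrees decrease.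
-/

section Trees

variable {ζ σ : Type*}

theorem finite_support_rev {S : List ζ → Option σ} (hS : {x | (S x).isSome}.Finite) :
    {x | (rev S x).isSome}.Finite :=
  (hS.image List.reverse).subset fun x hx => ⟨x.reverse, hx, x.reverse_reverse⟩

theorem finite_support_append_singleton {S : List ζ → Option σ}
    (hS : {x | (S x).isSome}.Finite) (i : ζ) : {x | (S (x ++ [i])).isSome}.Finite :=
  hS.preimage (List.append_left_injective [i]).injOn

theorem rev_cons (S : List ζ → Option σ) (i : ζ) :
    (fun x => rev S (i :: x)) = rev (fun x => S (x ++ [i])) := by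
  funext x
  simp [rev]

theorem eq_none_of_forall_length_lt_zero {S : List ζ → Option σ}
    (hS : ∀ x, (S x).isSome → x.length < 0) : S = fun _ => none := by
  funext x
  cases hx : S x with
  | none => rfl
  | some _ => exact absurd (hS x (by simp [hx])) (Nat.not_lt_zero _)

theorem exists_forall_length_lt {S : List ζ → Option σ} (hS : {x | (S x).isSome}.Finite) :
    ∃ N, ∀ x, (S x).isSome → x.length < N := by
  obtain ⟨N, hN⟩ := (hS.image List.length).bddAbove
  exact ⟨N + 1, fun x hx => Nat.lt_succ_of_le (hN ⟨x, hx, rfl⟩)⟩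

theorem induction_on_antiSubtrees {P : (List ζ → Option σ) → Prop}
    (empty : P fun _ => none)
    (step : ∀ S, {x | (S x).isSome}.Finite → (∀ i, P fun x => S (x ++ [i])) → P S) :
    ∀ S, {x | (S x).isSome}.Finite → P S := by
  suffices h : ∀ N S, {x | (S x).isSome}.Finite → (∀ x, (S x).isSome → x.length < N) → P S by
    intro S hS
    obtain ⟨N, hN⟩ := exists_forall_length_lt hS
    exact h N S hS hN
  intro N
  induction N with
  | zero =>
    intro S _ hN
    rw [eq_none_of_forall_length_lt_zero hN]
    exact empty
  | succ N ih =>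
    refine fun S hS hN => step S hS fun i => ih _ (finite_support_append_singleton hS i) ?_
    intro x hx
    simpa using hN _ hx

end Trees

/-- For a recursive projective linearisation `L` and the associated recursive
anti-projective linearisation `La` (same permutation `ρ`, anti-subtrees instead
of subtrees), one has `La S = L (overline S)` for every simple dependency tree
`S` (a partial map with finite domain). -/
theorem antiproj_eq_proj_rev {σ : Type*} {m : ℕ} (ρ : Equiv.Perm (Fin (m + 1)))
    (L La : (List (Fin m) → Option σ) → List σ)
    -- `L` is the recursive projective linearisation given by `ρ`
    (hL0 : L (fun _ => none) = [])
    (hL : ∀ S : List (Fin m) → Option σ, {x | (S x).isSome}.Finite →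
      L S = (List.ofFn (fun j : Fin (m + 1) =>
        Fin.cases (motive := fun _ => List σ) ((S []).toList)
          (fun i : Fin m => L (fun x => S (i :: x))) (ρ j))).flatten)
    -- `La` is the recursive anti-projective linearisation given by `ρ`
    (hLa0 : La (fun _ => none) = [])
    (hLa : ∀ S : List (Fin m) → Option σ, {x | (S x).isSome}.Finite →
      La S = (List.ofFn (fun j : Fin (m + 1) =>
        Fin.cases (motive := fun _ => List σ) ((S []).toList)
          (fun i : Fin m => La (fun x => S (x ++ [i]))) (ρ j))).flatten) :
    ∀ S : List (Fin m) → Option σ, {x | (S x).isSome}.Finite →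
      La S = L (rev S) := by
  refine induction_on_antiSubtrees (hLa0.trans hL0.symm) fun S hS ih => ?_
  rw [hLa S hS, hL (rev S) (finite_support_rev hS)]
  congr 2
  funext j
  cases ρ j using Fin.cases with
  | zero => rfl
  | succ i => simp only [Fin.cases_succ, rev_cons, ih i]
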